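/- arXiv:2201.02579 — 2 statements merged into one kernel-verified Lean document; each statement's English description precedes it below -/
import Mathlib

section
/- Let n ≥ 4, let C be the (n−1)×(n−1) circulant matrix circ(1,0,…,0,1), let X = 2(CCᵀ + I_{n−1})⁻¹((n−1)I_{n−1} − J_{n−1}), and Y = J_{n−1} + CᵀX. Then 𝟏ᵀX = 0ᵀ and X + C Y = 2(n−1) I_{n−1}. -/
open Matrix

noncomputable section

/-- The circulant matrix of order `m` with defining vector `v`:
its `(i,j)` entry is `v ((j - i) mod m)`. -/
def circ {m : ℕ} (v : Fin m → ℝ) : Matrix (Fin m) (Fin m) ℝ :=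
  Matrix.of fun i j => v (j - i)

/-- The `m × m` all-ones matrix. -/
def Jmat (m : ℕ) : Matrix (Fin m) (Fin m) ℝ := Matrix.of fun _ _ => 1

/-! Every row and column of `C` sums to `2`, so the all-ones row vector `u` satisfies
`u (C Cᵀ + I) = 5 u`, hence `u (C Cᵀ + I)⁻¹ = u / 5`; since `u ((n-1) I - J) = 0`, this gives
`u X = 0`.
The second identity is algebra: `X + C Y = C J + (C Cᵀ + I) X = 2 J + 2 ((n-1) I - J)`. -/

theorem sum_circ_row {m : ℕ} [NeZero m] (v : Fin m → ℝ) (i : Fin m) :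
    ∑ j, circ v i j = ∑ k, v k :=
  Fintype.sum_equiv (Equiv.subRight i) _ _ fun _ => rfl

theorem sum_circ_col {m : ℕ} [NeZero m] (v : Fin m → ℝ) (j : Fin m) :
    ∑ i, circ v i j = ∑ k, v k :=
  Fintype.sum_equiv (Equiv.subLeft j) _ _ fun _ => rfl

theorem sum_ite_val_eq_zero_or_eq {m a : ℕ} (ha₀ : a ≠ 0) (ham : a < m) :
    ∑ k : Fin m, (if k.val = 0 ∨ k.val = a then (1 : ℝ) else 0) = 2 := by
  have hfilter : Finset.univ.filter (fun k : Fin m => k.val = 0 ∨ k.val = a) =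
      {⟨0, by omega⟩, ⟨a, ham⟩} := by
    ext k
    simp [Fin.ext_iff]
  rw [Finset.sum_boole, hfilter, Finset.card_pair (by simp [Fin.ext_iff, Ne.symm ha₀])]
  norm_num

section OnesMatrix

variable {R ι κ : Type*} [Fintype κ] [NonAssocSemiring R]

theorem of_one_mul_eq_smul_of_col_sums {M : Matrix κ κ R} {s : R} (h : ∀ j, ∑ i, M i j = s) :
    (of fun (_ : ι) (_ : κ) => (1 : R)) * M = s • of fun _ _ => 1 := by
  ext x j
  simp [mul_apply, h j]

theorem mul_of_one_eq_smul_of_row_sums {M : Matrix κ κ R} {s : R} (h : ∀ i, ∑ j, M i j = s) :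
    M * (of fun (_ : κ) (_ : ι) => (1 : R)) = s • of fun _ _ => 1 := by
  ext i x
  simp [mul_apply, h i]

end OnesMatrix

theorem mul_inv_eq_inv_smul_of_mul_eq_smul {K ι κ : Type*} [Field K] [Fintype κ] [DecidableEq κ]
    {u : Matrix ι κ K} {M : Matrix κ κ K} {s : K} (hM : IsUnit M.det) (hs : s ≠ 0)
    (h : u * M = s • u) : u * M⁻¹ = s⁻¹ • u := by
  calc u * M⁻¹ = s⁻¹ • ((u * M) * M⁻¹) := by
        rw [h, smul_mul, smul_smul, inv_mul_cancel₀ hs, one_smul]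
    _ = s⁻¹ • u := by rw [Matrix.mul_assoc, mul_nonsing_inv _ hM, Matrix.mul_one]

theorem isUnit_det_mul_transpose_add_one {κ : Type*} [Fintype κ] [DecidableEq κ]
    (C : Matrix κ κ ℝ) : IsUnit (C * Cᵀ + 1).det := by
  have hPSD : (C * Cᵀ).PosSemidef := by
    simpa only [conjTranspose_eq_transpose_of_trivial] using posSemidef_self_mul_conjTranspose C
  exact (PosDef.posSemidef_add hPSD PosDef.one).det_pos.ne'.isUnit

theorem wheel_X_rowsum_and_XCY (n : ℕ) (hn : 4 ≤ n)
    (C X Y : Matrix (Fin (n-1)) (Fin (n-1)) ℝ)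
    (hC : C = circ (fun k => if k.val = 0 ∨ k.val = n - 2 then (1:ℝ) else 0))
    (hX : X = (2:ℝ) • ((C * Cᵀ + 1)⁻¹ * (((n:ℝ) - 1) • (1 : Matrix (Fin (n-1)) (Fin (n-1)) ℝ) - Jmat (n-1))))
    (hY : Y = Jmat (n-1) + Cᵀ * X) :
    (Matrix.of fun (_ : Fin 1) (_ : Fin (n-1)) => (1:ℝ)) * X = 0 ∧
      X + C * Y = (2 * ((n:ℝ) - 1)) • (1 : Matrix (Fin (n-1)) (Fin (n-1)) ℝ) := by
  have : NeZero (n - 1) := ⟨by omega⟩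
  have hv : ∑ k : Fin (n - 1), (if k.val = 0 ∨ k.val = n - 2 then (1 : ℝ) else 0) = 2 :=
    sum_ite_val_eq_zero_or_eq (by omega) (by omega)
  have hrow : ∀ i, ∑ j, C i j = 2 := fun i => by rw [hC, sum_circ_row, hv]
  have hcol : ∀ j, ∑ i, C i j = 2 := fun j => by rw [hC, sum_circ_col, hv]
  have hdet := isUnit_det_mul_transpose_add_one C
  set u : Matrix (Fin 1) (Fin (n - 1)) ℝ := of fun _ _ => 1
  constructor
  · have huA : u * (C * Cᵀ + 1) = (5 : ℝ) • u := by
      rw [Matrix.mul_add, Matrix.mul_one, ← Matrix.mul_assoc, of_one_mul_eq_smul_of_col_sums hcol,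
        smul_mul, of_one_mul_eq_smul_of_col_sums (M := Cᵀ) hrow]
      module
    have huJ : u * Jmat (n - 1) = ((n : ℝ) - 1) • u :=
      of_one_mul_eq_smul_of_col_sums fun j => by simp [Jmat, Nat.cast_sub (by omega : 1 ≤ n)]
    rw [hX, Matrix.mul_smul, ← Matrix.mul_assoc,
      mul_inv_eq_inv_smul_of_mul_eq_smul hdet (by norm_num) huA, Matrix.smul_mul,
      Matrix.mul_sub, Matrix.mul_smul, Matrix.mul_one, huJ, sub_self, smul_zero, smul_zero]
  · calc X + C * Y = (2 : ℝ) • Jmat (n - 1) + (C * Cᵀ + 1) * X := by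
          rw [hY, Matrix.mul_add, ← Matrix.mul_assoc, Jmat, mul_of_one_eq_smul_of_row_sums hrow,
            Matrix.add_mul, Matrix.one_mul]
          abel
      _ = (2 * ((n : ℝ) - 1)) • 1 := by
          rw [hX, Matrix.mul_smul, ← Matrix.mul_assoc, mul_nonsing_inv _ hdet, Matrix.one_mul]
          module
end
end

section
/- Let n ≥ 5, let C be the (n−1)×(n−1) circulant matrix circ(1,0,…,0,−1), X = (CCᵀ + I_{n−1})⁻¹(J_{n−1} − n·I_{n−1}), and Y = −CᵀX. Then Y equals the circulant matrix circ(d_0, d_1, …, d_{n−2}) where d_0 = (2n/√5) · [ ((3+√5)^{n−2} − 2^{n−2}) / (2^{n−1} − (3+√5)^{n−1}) − ((3−√5)^{n−2} − 2^{n−2}) / (2^{n−1} − (3−√5)^{n−1}) ], and for 1 ≤ j ≤ n−2, d_j = −(n·2^{n−j}/(5+√5)) · [ (3+√5)^j / (2^{n−1} − (3+√5)^{n−1}) + 2(3−√5)^{j−1} / (2^{n−1} − (3−√5)^{n−1}) ]. -/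
/-!
With `P` the cyclic shift, `C = 1 - Pᵀ`, so `A := CCᵀ + 1 = 3 - P - Pᵀ`, and all matrices in
sight are circulant, hence commute. The rows of `Cᵀ` sum to zero, so `CᵀJ = 0` and
`Y = -CᵀA⁻¹(J - nI) = n A⁻¹ Cᵀ`. It therefore suffices to check `A D = n Cᵀ` for `D = circ d`,
i.e. `3 d_t - d_{t-1} - d_{t+1} = n (δ_{t,0} - δ_{t,1})` on `ℤ/(n-1)`. Away from `t = 0, 1` this
is the recurrence `x_{j+2} = 3 x_{j+1} - x_j`, solved by `r^j` and `s^j` for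
`r, s = (3 ± √5)/2 = φ², ψ²`; the two remaining equations fix the coefficients.
`A` is invertible because it is positive definite.
-/

open Matrix

noncomputable section

open Real goldenRatio

section Circulant

variable {m : ℕ}

lemma circ_eq_transpose_circulant (v : Fin m → ℝ) : circ v = (circulant v)ᵀ := rfl

lemma circ_add (u v : Fin m → ℝ) : circ u + circ v = circ (u + v) := rfl

lemma circ_sub (u v : Fin m → ℝ) : circ u - circ v = circ (u - v) := rfl

lemma circ_smul (c : ℝ) (v : Fin m → ℝ) : c • circ v = circ (c • v) := rfl

lemma circ_mul_comm (u v : Fin m → ℝ) : circ u * circ v = circ v * circ u := by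
  simp only [circ_eq_transpose_circulant, ← transpose_mul, Fin.circulant_mul_comm]

variable [NeZero m]

lemma transpose_circ (v : Fin m → ℝ) : (circ v)ᵀ = circ fun t => v (-t) := by
  ext i j
  simp [circ]

lemma circ_mul_Jmat (v : Fin m → ℝ) : circ v * Jmat m = (∑ t, v t) • Jmat m := by
  ext i j
  simp only [circ, Jmat, mul_apply, of_apply, mul_one, Matrix.smul_apply, smul_eq_mul]
  exact Fintype.sum_equiv (Equiv.subRight i) _ _ fun _ => rfl

lemma circ_single_mul (a : Fin m) (v : Fin m → ℝ) :
    circ (Pi.single a 1) * circ v = circ fun t => v (t - a) := by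
  ext i j
  simp only [circ, mul_apply, of_apply, Pi.single_apply, ite_mul, one_mul, zero_mul,
    sub_eq_iff_eq_add, Finset.sum_ite_eq', Finset.mem_univ, if_true]
  congr 1
  abel

lemma circ_single_sub_single_mul (a b : Fin m) (v : Fin m → ℝ) :
    circ (Pi.single a 1 - Pi.single b 1) * circ v = circ fun t => v (t - a) - v (t - b) := by
  rw [← circ_sub, Matrix.sub_mul, circ_single_mul, circ_single_mul, circ_sub]
  rfl

lemma cycle_gram_add_one_mul_circ (v : Fin m → ℝ) :
    (circ (Pi.single 0 1 - Pi.single (-1) 1) * circ (Pi.single 0 1 - Pi.single 1 1) + 1)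
        * circ v = circ fun t => 3 * v t - v (t - 1) - v (t + 1) := by
  rw [Matrix.add_mul, Matrix.one_mul, Matrix.mul_assoc, circ_single_sub_single_mul,
    circ_single_sub_single_mul, circ_add]
  congr 1
  funext t
  simp only [Pi.add_apply, sub_zero, sub_neg_eq_add, add_sub_cancel_right]
  ring

lemma transpose_circ_single_sub_single_neg_one :
    (circ (Pi.single 0 1 - Pi.single (-1) 1 : Fin m → ℝ))ᵀ
      = circ (Pi.single 0 1 - Pi.single 1 1) := by
  rw [transpose_circ]
  congr 1
  funext t
  simp [Pi.single_apply, neg_eq_iff_eq_neg]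

lemma val_eq_sub_one_iff_eq_neg_one (t : Fin m) : t.val = m - 1 ↔ t = -1 := by
  obtain ⟨k, rfl⟩ : ∃ k, m = k + 1 := Nat.exists_eq_succ_of_ne_zero (NeZero.ne m)
  rw [Fin.ext_iff, Fin.coe_neg_one, Nat.add_sub_cancel]

lemma single_sub_single_neg_one_eq_ite (hm : 2 ≤ m) :
    (Pi.single 0 1 - Pi.single (-1) 1 : Fin m → ℝ)
      = fun t => if t.val = 0 then 1 else if t.val = m - 1 then -1 else 0 := by
  have h0 : (0 : Fin m) ≠ -1 := by
    rw [Ne, ← val_eq_sub_one_iff_eq_neg_one, Fin.val_zero]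
    omega
  funext t
  simp only [Fin.val_eq_zero_iff, val_eq_sub_one_iff_eq_neg_one, Pi.sub_apply, Pi.single_apply]
  split_ifs <;> simp_all

end Circulant

lemma isUnit_mul_transpose_add_one {ι : Type*} [Fintype ι] [DecidableEq ι]
    (C : Matrix ι ι ℝ) : IsUnit (C * Cᵀ + 1) := by
  refine PosDef.isUnit ?_
  rw [add_comm, ← conjTranspose_eq_transpose_of_trivial]
  exact PosDef.one.add_posSemidef (posSemidef_self_mul_conjTranspose C)

lemma neg_mul_inv_mul_sub_smul_one {ι R : Type*} [Fintype ι] [DecidableEq ι] [CommRing R]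
    {A B D J : Matrix ι ι R} {c : R} (hA : IsUnit A) (hBA : Commute B A) (hBJ : B * J = 0)
    (hAD : A * D = c • B) : -(B * (A⁻¹ * (J - c • 1))) = D := by
  let := hA.invertible
  have hBA' : B * A⁻¹ = A⁻¹ * B := by
    rw [← invOf_eq_nonsing_inv]
    exact hBA.invOf_right.eq
  calc -(B * (A⁻¹ * (J - c • 1))) = A⁻¹ * (c • B) - A⁻¹ * (B * J) := by
        rw [← Matrix.mul_assoc, hBA', Matrix.mul_assoc]
        simp only [Matrix.mul_sub, Matrix.mul_smul, Matrix.mul_one]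
        abel
    _ = D := by rw [hBJ, ← hAD, inv_mul_cancel_left_of_invertible, Matrix.mul_zero, sub_zero]

def cyclicVec (e : ℕ → ℝ) (m : ℕ) : Fin m → ℝ :=
  fun t => if t.val = 0 then e m else e t.val

/- Placing `e m` at index `0` lets the recurrence run across the wrap-around `m - 1 → 0`; at
`t = 0` and `t = 1` it reduces the equation to `h1` and `h0` respectively. -/
lemma cyclicVec_second_difference {e : ℕ → ℝ} {c : ℝ} {m : ℕ} [NeZero m] (hm : 3 ≤ m)
    (hrec : ∀ j, e (j + 2) = 3 * e (j + 1) - e j) (h0 : e m - e 0 = c)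
    (h1 : e (m + 1) - e 1 = c) (t : Fin m) :
    3 * cyclicVec e m t - cyclicVec e m (t - 1) - cyclicVec e m (t + 1)
      = c * (Pi.single 0 1 - Pi.single 1 1 : Fin m → ℝ) t := by
  obtain ⟨k, rfl⟩ : ∃ k, m = k + 1 := ⟨m - 1, by omega⟩
  have hone : 1 % (k + 1) = 1 := Nat.mod_eq_of_lt (by omega)
  rcases t with ⟨_ | _ | i, hi⟩
  · simp [cyclicVec, Fin.ext_iff, hone, show k ≠ 0 by omega]
    linarith [hrec k]
  · simp [cyclicVec, Fin.coe_sub_one, Fin.val_add_one, Pi.single_apply, Fin.ext_iff, hone,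
      show 1 ≠ k by omega]
    linarith [hrec 0]
  · simp [cyclicVec, Fin.coe_sub_one, Fin.val_add_one, Fin.ext_iff, hone]
    split_ifs with hlast
    · subst hlast
      linarith [hrec (i + 1)]
    · linarith [hrec (i + 1)]

def cyclicGreen (r s : ℝ) (m j : ℕ) : ℝ :=
  (r ^ j / (r ^ m - 1) + r * s ^ j / (s ^ m - 1)) / (1 + r)

section CyclicGreen

variable {r s : ℝ} {m : ℕ}

lemma cyclicGreen_add_two (hsum : r + s = 3) (hprod : r * s = 1) (j : ℕ) :
    cyclicGreen r s m (j + 2) = 3 * cyclicGreen r s m (j + 1) - cyclicGreen r s m j := by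
  have hr : r ^ 2 = 3 * r - 1 := by linear_combination r * hsum - hprod
  have hs : s ^ 2 = 3 * s - 1 := by linear_combination s * hsum - hprod
  simp only [cyclicGreen, div_eq_mul_inv]
  linear_combination (r ^ j * (r ^ m - 1)⁻¹ * (1 + r)⁻¹) * hr
    + (r * s ^ j * (s ^ m - 1)⁻¹ * (1 + r)⁻¹) * hs

lemma cyclicGreen_add_sub (hrm : r ^ m ≠ 1) (hsm : s ^ m ≠ 1) (k : ℕ) :
    cyclicGreen r s m (m + k) - cyclicGreen r s m k = (r ^ k + r * s ^ k) / (1 + r) := by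
  have hrm' : r ^ m - 1 ≠ 0 := sub_ne_zero.2 hrm
  have hsm' : s ^ m - 1 ≠ 0 := sub_ne_zero.2 hsm
  simp only [cyclicGreen, pow_add]
  field_simp
  ring

lemma cyclicGreen_second_difference [NeZero m] (hm : 3 ≤ m) (hsum : r + s = 3)
    (hprod : r * s = 1) (hr : 1 + r ≠ 0) (hrm : r ^ m ≠ 1) (hsm : s ^ m ≠ 1) (c : ℝ)
    (t : Fin m) :
    3 * cyclicVec (fun j => c * cyclicGreen r s m j) m t
        - cyclicVec (fun j => c * cyclicGreen r s m j) m (t - 1)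
        - cyclicVec (fun j => c * cyclicGreen r s m j) m (t + 1)
      = c * (Pi.single 0 1 - Pi.single 1 1 : Fin m → ℝ) t := by
  refine cyclicVec_second_difference hm (fun j => ?_) ?_ ?_ t
  · rw [cyclicGreen_add_two hsum hprod]
    ring
  · have h := cyclicGreen_add_sub hrm hsm 0
    simp only [add_zero, pow_zero, mul_one, div_self hr] at h
    rw [← mul_sub, h, mul_one]
  · have h := cyclicGreen_add_sub hrm hsm 1
    rw [pow_one, pow_one, hprod, add_comm r, div_self hr] at h
    rw [← mul_sub, h, mul_one]

end CyclicGreen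

lemma goldenRatio_sq_eq : φ ^ 2 = (3 + √5) / 2 := by
  rw [goldenRatio_sq, goldenRatio]
  ring

lemma goldenConj_sq_eq_inv : ψ ^ 2 = (φ ^ 2)⁻¹ := by
  rw [← inv_pow, inv_goldenRatio, neg_sq]

lemma goldenRatio_sq_add_goldenConj_sq : φ ^ 2 + ψ ^ 2 = 3 := by
  rw [goldenRatio_sq, goldenConj_sq]
  linear_combination goldenRatio_add_goldenConj

lemma goldenRatio_sq_mul_goldenConj_sq : φ ^ 2 * ψ ^ 2 = 1 := by
  rw [← mul_pow, goldenRatio_mul_goldenConj]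
  norm_num

lemma one_lt_goldenRatio_sq : 1 < φ ^ 2 := one_lt_pow₀ one_lt_goldenRatio two_ne_zero

lemma goldenConj_sq_lt_one : ψ ^ 2 < 1 := by
  rw [goldenConj_sq_eq_inv]
  exact inv_lt_one_of_one_lt₀ one_lt_goldenRatio_sq

lemma sqrt_five_eq_goldenRatio_sq : √5 = φ ^ 2 - (φ ^ 2)⁻¹ := by
  rw [← goldenConj_sq_eq_inv, goldenRatio_sq, goldenConj_sq, ← goldenRatio_sub_goldenConj]
  ring

lemma three_add_sqrt_five : 3 + √5 = 2 * φ ^ 2 := by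
  rw [goldenRatio_sq_eq]
  ring

lemma three_sub_sqrt_five : 3 - √5 = 2 * (φ ^ 2)⁻¹ := by
  rw [← goldenConj_sq_eq_inv, goldenConj_sq, goldenConj]
  ring

lemma cyclicGreen_goldenRatio_self {n : ℕ} (hn : 2 ≤ n) :
    n * cyclicGreen (φ ^ 2) (ψ ^ 2) (n - 1) (n - 1)
      = (2 * (n:ℝ) / √5) * (((3 + √5) ^ (n - 2) - (2:ℝ) ^ (n - 2)) / ((2:ℝ) ^ (n - 1)
          - (3 + √5) ^ (n - 1)) - ((3 - √5) ^ (n - 2) - (2:ℝ) ^ (n - 2)) / ((2:ℝ) ^ (n - 1)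
          - (3 - √5) ^ (n - 1))) := by
  obtain ⟨p, hp⟩ : ∃ p, n - 1 = p + 1 := ⟨n - 2, by omega⟩
  have hfac : ∀ b : ℝ, (2:ℝ) ^ (p + 1) - (2 * b) ^ (p + 1)
      = 2 ^ (p + 1) * (1 - b ^ (p + 1)) := fun b => by ring
  rw [show n - 2 = p by omega, hp, three_add_sqrt_five, three_sub_sqrt_five, hfac, hfac,
    sqrt_five_eq_goldenRatio_sq, cyclicGreen, goldenConj_sq_eq_inv]
  have hr := one_lt_goldenRatio_sq
  generalize φ ^ 2 = r at hr ⊢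
  have hr2 : r ^ 2 - 1 ≠ 0 := sub_ne_zero.2 (one_lt_pow₀ hr two_ne_zero).ne'
  have hrm : r ^ (p + 1) - 1 ≠ 0 := sub_ne_zero.2 (one_lt_pow₀ hr (by omega)).ne'
  have hrm' : 1 - r ^ (p + 1) ≠ 0 := sub_ne_zero.2 (one_lt_pow₀ hr (by omega)).ne
  simp only [mul_pow, inv_pow]
  field_simp
  ring

lemma cyclicGreen_goldenRatio_of_pos {n j : ℕ} (hj : 1 ≤ j) (hjn : j < n) :
    n * cyclicGreen (φ ^ 2) (ψ ^ 2) (n - 1) j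
      = -((n:ℝ) * (2:ℝ) ^ (n - j) / (5 + √5)) * ((3 + √5) ^ j / ((2:ℝ) ^ (n - 1)
          - (3 + √5) ^ (n - 1)) + 2 * (3 - √5) ^ (j - 1) / ((2:ℝ) ^ (n - 1)
          - (3 - √5) ^ (n - 1))) := by
  obtain ⟨i, rfl⟩ : ∃ i, j = i + 1 := ⟨j - 1, by omega⟩
  obtain ⟨k, hk⟩ : ∃ k, n - 1 = i + k + 1 := ⟨n - i - 2, by omega⟩
  have hfac : ∀ b : ℝ, (2:ℝ) ^ (i + k + 1) - (2 * b) ^ (i + k + 1)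
      = 2 ^ (i + k + 1) * (1 - b ^ (i + k + 1)) := fun b => by ring
  rw [show n - (i + 1) = k + 1 by omega, Nat.add_sub_cancel, hk, three_add_sqrt_five,
    three_sub_sqrt_five, show (5:ℝ) + √5 = 2 + (3 + √5) by ring, three_add_sqrt_five, hfac,
    hfac, cyclicGreen, goldenConj_sq_eq_inv]
  have hr := one_lt_goldenRatio_sq
  generalize φ ^ 2 = r at hr ⊢
  have hrm : r ^ (i + k + 1) - 1 ≠ 0 := sub_ne_zero.2 (one_lt_pow₀ hr (by omega)).ne'
  have hrm' : 1 - r ^ (i + k + 1) ≠ 0 := sub_ne_zero.2 (one_lt_pow₀ hr (by omega)).ne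
  simp only [mul_pow, inv_pow]
  field_simp
  ring

theorem wheel_oriented_Y_entries (n : ℕ) (hn : 5 ≤ n)
    (C X Y : Matrix (Fin (n-1)) (Fin (n-1)) ℝ)
    (hC : C = circ (fun k => if k.val = 0 then (1:ℝ) else if k.val = n - 2 then -1 else 0))
    (hX : X = (C * Cᵀ + 1)⁻¹ * (Jmat (n-1) - (n:ℝ) • (1 : Matrix (Fin (n-1)) (Fin (n-1)) ℝ)))
    (hY : Y = -(Cᵀ * X)) :
    Y = circ (fun j : Fin (n-1) =>
      if j.val = 0 then
        (2 * (n:ℝ) / Real.sqrt 5) * (((3 + Real.sqrt 5) ^ (n-2) - (2:ℝ) ^ (n-2)) / ((2:ℝ) ^ (n-1) - (3 + Real.sqrt 5) ^ (n-1)) - ((3 - Real.sqrt 5) ^ (n-2) - (2:ℝ) ^ (n-2)) / ((2:ℝ) ^ (n-1) - (3 - Real.sqrt 5) ^ (n-1)))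
      else
        -((n:ℝ) * (2:ℝ) ^ (n-j.val) / (5 + Real.sqrt 5)) * ((3 + Real.sqrt 5) ^ j.val / ((2:ℝ) ^ (n-1) - (3 + Real.sqrt 5) ^ (n-1)) + 2 * (3 - Real.sqrt 5) ^ (j.val - 1) / ((2:ℝ) ^ (n-1) - (3 - Real.sqrt 5) ^ (n-1)))) := by
  have : NeZero (n - 1) := ⟨by omega⟩
  rw [show n - 2 = n - 1 - 1 by omega, ← single_sub_single_neg_one_eq_ite (by omega)] at hC
  have hCt : Cᵀ = circ (Pi.single 0 1 - Pi.single 1 1) :=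
    hC ▸ transpose_circ_single_sub_single_neg_one
  have hCJ : Cᵀ * Jmat (n - 1) = 0 := by
    rw [hCt, circ_mul_Jmat]
    simp
  have hCA : Commute Cᵀ (C * Cᵀ + 1) := by
    have hCCt : Commute Cᵀ C := by rw [hCt, hC]; exact circ_mul_comm _ _
    exact (hCCt.mul_right (Commute.refl _)).add_right (Commute.one_right _)
  set e : ℕ → ℝ := fun j => n * cyclicGreen (φ ^ 2) (ψ ^ 2) (n - 1) j
  have hAD : (C * Cᵀ + 1) * circ (cyclicVec e (n - 1)) = (n : ℝ) • Cᵀ := by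
    rw [hCt, hC, cycle_gram_add_one_mul_circ, circ_smul]
    congr 1
    funext t
    exact cyclicGreen_second_difference (by omega) goldenRatio_sq_add_goldenConj_sq
      goldenRatio_sq_mul_goldenConj_sq (by positivity)
      (one_lt_pow₀ one_lt_goldenRatio_sq (by omega)).ne'
      (pow_lt_one₀ (by positivity) goldenConj_sq_lt_one (by omega)).ne n t
  rw [hY, hX, neg_mul_inv_mul_sub_smul_one (isUnit_mul_transpose_add_one C) hCA hCJ hAD]
  congr 1
  funext t
  unfold cyclicVec
  split_ifs with ht
  · exact cyclicGreen_goldenRatio_self (by omega)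
  · exact cyclicGreen_goldenRatio_of_pos (Nat.one_le_iff_ne_zero.2 ht) (by omega)
end
end
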